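/- Let β satisfy 1 < β < 3/2 and let f(x) = tanh(βx) − x. Let x₀ : ℝ → ℝ be a continuous 1-periodic function and let v : ℝ → ℝ be a differentiable 1-periodic function, not identically zero, satisfying v'(t) = f'(x₀(t))·v(t) for all t. Then ∫₀¹ f'''(x₀(s))·v(s)² ds < 0. -/

import Mathlib

/-!
Along a solution of the linearized equation `(v²)' = 2 f'(x₀) v²`, so periodicity of `v` gives
`∫₀¹ f'(x₀) v² = 0`. With `ζ = tanh (β x)` one has `β ζ² = β - 1 - f'`, which turns `f'''` into a
polynomial in `f'`: `f''' = 2β(2β - 3) + 4β(β - 3) f' - 6β f'²`. Dropping the last term and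
integrating against `v²` leaves `∫₀¹ f'''(x₀) v² ≤ 2β(2β - 3) ∫₀¹ v² < 0` when `0 < β < 3/2`.
-/

open Real Function

namespace Real

theorem hasDerivAt_tanh (x : ℝ) : HasDerivAt tanh (1 - tanh x ^ 2) x := by
  rw [show tanh = fun y => sinh y / cosh y from funext tanh_eq_sinh_div_cosh]
  refine ((hasDerivAt_sinh x).div (hasDerivAt_cosh x) (cosh_pos x).ne').congr_deriv ?_
  field_simp

@[fun_prop]
theorem continuous_tanh : Continuous tanh :=
  continuous_iff_continuousAt.2 fun x => (hasDerivAt_tanh x).continuousAt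

end Real

section TanhMulSubId

variable (β : ℝ)

theorem hasDerivAt_tanh_mul (x : ℝ) :
    HasDerivAt (fun y => tanh (β * y)) (β * (1 - tanh (β * x) ^ 2)) x :=
  ((hasDerivAt_tanh (β * x)).comp x ((hasDerivAt_id x).const_mul β)).congr_deriv (by ring)

theorem deriv_tanh_mul_sub_id :
    deriv (fun x => tanh (β * x) - x) = fun x => β * (1 - tanh (β * x) ^ 2) - 1 :=
  funext fun x =>
    ((hasDerivAt_tanh_mul β x).sub (hasDerivAt_id x) :
      HasDerivAt (fun x => tanh (β * x) - x) _ x).deriv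

theorem iteratedDeriv_three_tanh_mul_sub_id :
    iteratedDeriv 3 (fun x => tanh (β * x) - x) =
      fun x => -2 * β ^ 3 * (1 - tanh (β * x) ^ 2) * (1 - 3 * tanh (β * x) ^ 2) := by
  have hT := hasDerivAt_tanh_mul β
  have h2 : deriv (fun x => β * (1 - tanh (β * x) ^ 2) - 1) =
      fun x => -2 * β ^ 2 * (tanh (β * x) - tanh (β * x) ^ 3) := funext fun x => by
    have h : HasDerivAt (fun x => β * (1 - tanh (β * x) ^ 2) - 1) _ x :=
      (((hT x).pow 2).const_sub 1).const_mul β |>.sub_const 1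
    rw [h.deriv]
    ring
  rw [iteratedDeriv_succ, iteratedDeriv_succ, iteratedDeriv_one, deriv_tanh_mul_sub_id, h2]
  funext x
  have h : HasDerivAt (fun x => -2 * β ^ 2 * (tanh (β * x) - tanh (β * x) ^ 3)) _ x :=
    ((hT x).sub ((hT x).pow 3)).const_mul (-2 * β ^ 2)
  rw [h.deriv]
  ring

theorem iteratedDeriv_three_tanh_mul_sub_id_eq (x : ℝ) :
    iteratedDeriv 3 (fun x => tanh (β * x) - x) x =
      2 * β * (2 * β - 3) + 4 * β * (β - 3) * deriv (fun x => tanh (β * x) - x) x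
        - 6 * β * deriv (fun x => tanh (β * x) - x) x ^ 2 := by
  rw [iteratedDeriv_three_tanh_mul_sub_id, deriv_tanh_mul_sub_id]
  ring

theorem iteratedDeriv_three_tanh_mul_sub_id_le (hβ : 0 ≤ β) (x : ℝ) :
    iteratedDeriv 3 (fun x => tanh (β * x) - x) x ≤
      2 * β * (2 * β - 3) + 4 * β * (β - 3) * deriv (fun x => tanh (β * x) - x) x := by
  rw [iteratedDeriv_three_tanh_mul_sub_id_eq]
  nlinarith [mul_nonneg hβ (sq_nonneg (deriv (fun x => tanh (β * x) - x) x))]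

theorem continuous_deriv_tanh_mul_sub_id :
    Continuous (deriv fun x => tanh (β * x) - x) := by
  rw [deriv_tanh_mul_sub_id]
  fun_prop

theorem continuous_iteratedDeriv_three_tanh_mul_sub_id :
    Continuous (iteratedDeriv 3 fun x => tanh (β * x) - x) := by
  rw [iteratedDeriv_three_tanh_mul_sub_id]
  fun_prop

end TanhMulSubId

theorem integral_mul_sq_eq_of_hasDerivAt {a v : ℝ → ℝ} (ha : Continuous a)
    (hv : ∀ t, HasDerivAt v (a t * v t) t) (s t : ℝ) :
    ∫ u in s..t, a u * v u ^ 2 = (v t ^ 2 - v s ^ 2) / 2 := by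
  have hvc : Continuous v := continuous_iff_continuousAt.2 fun t => (hv t).continuousAt
  rw [intervalIntegral.integral_eq_sub_of_hasDerivAt (f := fun u => v u ^ 2 / 2)
    (f' := fun u => a u * v u ^ 2) (fun u _ => ?_) ((ha.mul (hvc.pow 2)).intervalIntegrable s t)]
  · ring
  · exact (((hv u).pow 2).div_const 2).congr_deriv (by ring)

theorem Function.Periodic.intervalIntegral_pos {g : ℝ → ℝ} {p : ℝ} (hg : Periodic g p)
    (hp : 0 < p) (hc : Continuous g) (hnonneg : ∀ t, 0 ≤ g t) (hpos : ∃ t, 0 < g t) :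
    0 < ∫ t in (0 : ℝ)..p, g t := by
  obtain ⟨t, ht⟩ := hpos
  obtain ⟨s, hs, hst⟩ := hg.exists_mem_Ico₀ hp t
  exact intervalIntegral.integral_pos hp hc.continuousOn (fun x _ => hnonneg x)
    ⟨s, Set.Ico_subset_Icc_self hs, hst ▸ ht⟩

theorem intervalIntegral_mul_sq_neg_of_le_affine {a g v : ℝ → ℝ} {p c₀ c₁ : ℝ} (hp : 0 < p)
    (ha : Continuous a) (hg : Continuous g) (hv : ∀ t, HasDerivAt v (a t * v t) t)
    (hper : Periodic v p) (hne : ∃ t, v t ≠ 0) (hle : ∀ t, g t ≤ c₀ + c₁ * a t)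
    (hc₀ : c₀ < 0) :
    ∫ t in (0 : ℝ)..p, g t * v t ^ 2 < 0 := by
  have hvc : Continuous v := continuous_iff_continuousAt.2 fun t => (hv t).continuousAt
  have hav : ∫ t in (0 : ℝ)..p, a t * v t ^ 2 = 0 := by
    rw [integral_mul_sq_eq_of_hasDerivAt ha hv, show v p = v 0 by simpa using hper 0, sub_self,
      zero_div]
  have hpos : 0 < ∫ t in (0 : ℝ)..p, v t ^ 2 := by
    obtain ⟨t, ht⟩ := hne
    exact (hper.comp fun x => x ^ 2).intervalIntegral_pos hp (hvc.pow 2) (fun t => sq_nonneg _)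
      ⟨t, sq_pos_of_ne_zero ht⟩
  calc ∫ t in (0 : ℝ)..p, g t * v t ^ 2
      ≤ ∫ t in (0 : ℝ)..p, (c₀ * v t ^ 2 + c₁ * (a t * v t ^ 2)) := by
        refine intervalIntegral.integral_mono_on hp.le ((hg.mul (hvc.pow 2)).intervalIntegrable _ _)
          (Continuous.intervalIntegrable (by fun_prop) _ _) fun t _ => ?_
        nlinarith [mul_le_mul_of_nonneg_right (hle t) (sq_nonneg (v t))]
    _ = c₀ * ∫ t in (0 : ℝ)..p, v t ^ 2 := by
        rw [intervalIntegral.integral_add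
          (Continuous.intervalIntegrable (by fun_prop) _ _)
          (Continuous.intervalIntegrable (by fun_prop) _ _),
          intervalIntegral.integral_const_mul, intervalIntegral.integral_const_mul, hav, mul_zero,
          add_zero]
    _ < 0 := mul_neg_of_neg_of_pos hc₀ hpos

theorem third_deriv_integral_neg_improved_general (β : ℝ) (hβ1 : 1 < β) (hβ2 : β < 3/2)
    (f : ℝ → ℝ) (hf : ∀ x, f x = Real.tanh (β * x) - x)
    (x₀ : ℝ → ℝ) (hx₀ : Continuous x₀)
    (v : ℝ → ℝ) (hv : Differentiable ℝ v) (hvper : ∀ t, v (t + 1) = v t)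
    (hvne : ¬ ∀ t, v t = 0)
    (hveq : ∀ t, deriv v t = deriv f (x₀ t) * v t) :
    (∫ s in (0:ℝ)..1, iteratedDeriv 3 f (x₀ s) * v s ^ 2) < 0 := by
  obtain rfl : f = fun x => tanh (β * x) - x := funext hf
  have hβ0 : 0 ≤ β := by linarith
  refine intervalIntegral_mul_sq_neg_of_le_affine one_pos
    ((continuous_deriv_tanh_mul_sub_id β).comp hx₀)
    ((continuous_iteratedDeriv_three_tanh_mul_sub_id β).comp hx₀)
    (fun t => hveq t ▸ (hv t).hasDerivAt) hvper (not_forall.1 hvne)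
    (fun t => iteratedDeriv_three_tanh_mul_sub_id_le β hβ0 (x₀ t)) (by nlinarith)

theorem third_deriv_integral_neg_improved (β : ℝ) (hβ1 : 1 < β) (hβ2 : β < 3/2)
    (f : ℝ → ℝ) (hf : ∀ x, f x = Real.tanh (β * x) - x)
    (x₀ : ℝ → ℝ) (hx₀ : Continuous x₀) (hx₀per : ∀ t, x₀ (t + 1) = x₀ t)
    (v : ℝ → ℝ) (hv : Differentiable ℝ v) (hvper : ∀ t, v (t + 1) = v t)
    (hvne : ¬ ∀ t, v t = 0)
    (hveq : ∀ t, deriv v t = deriv f (x₀ t) * v t) :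
    (∫ s in (0:ℝ)..1, iteratedDeriv 3 f (x₀ s) * v s ^ 2) < 0 :=
  third_deriv_integral_neg_improved_general β hβ1 hβ2 f hf x₀ hx₀ v hv hvper hvne hveq
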